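/- Let ζ ∈ k be a primitive 4th root of unity and A = k[u]/(u⁴ − 1). (i) For every γ ∈ k with γ² = 2ζ there exists a T(4,2,1)-module-algebra structure (σ, δ) on A with σ(u) = ζ·u and δ(u) = γ·u³, and this structure is inner-faithful (σ has order 4 and δ ≠ 0). (ii) Conversely, every T(4,2,1)-module-algebra structure (σ, δ) on A with σ(u) = ζ·u and δ ≠ 0 satisfies δ(u) = γ·u³ for some γ ∈ k with γ² = 2ζ. -/

import Mathlib

/-!
Write `σ(u) = ζu`. The relation `σδ = -δσ` makes `δ(u)` an eigenvector of `σ` for the eigenvalue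
`-ζ = ζ³`, and the eigenvalues `ζ^i` of `σ` on the basis `u^i` are distinct, so `δ(u) = γu³`. The
twisted Leibniz rule then gives `δ²(u) = ζγ²u`, while `(σ² - 1)(u) = -2u`; hence `γ² = 2ζ`.

Conversely, for every `c` the map `a ↦ c(σ(a) - a)` satisfies the twisted Leibniz rule. With
`c = γ(ζ - 1)⁻¹u²` it sends `u` to `γu³`; `σ(c) = -c` gives `σδ = -δσ`, and `δ² = -c²(σ² - 1)`
where `c² = -1` is exactly the condition `γ² = 2ζ`.
-/

/-- A `T(4,2,1)`-module-algebra structure on `A`, given by the action `σ` of the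
grouplike `g` and the action `δ` of the `(g,1)`-skew primitive `x`, where
`g⁴ = 1`, `x² = g² - 1`, `gx = -xg`. -/
def IsT421Action {k A : Type*} [Field k] [CommRing A] [Algebra k A]
    (σ : A ≃ₐ[k] A) (δ : A →ₗ[k] A) : Prop :=
  σ ^ 4 = 1 ∧ δ 1 = 0 ∧
  (∀ a c : A, δ (a * c) = σ a * δ c + δ a * c) ∧
  σ.toLinearMap ∘ₗ δ = -(δ ∘ₗ σ.toLinearMap) ∧
  δ ∘ₗ δ = σ.toLinearMap ∘ₗ σ.toLinearMap - LinearMap.id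

section InnerSkewDerivation

variable {k A : Type*} [CommRing k] [CommRing A] [Algebra k A]

noncomputable def innerSkewDerivation (σ : A →ₐ[k] A) (c : A) : A →ₗ[k] A :=
  LinearMap.mulLeft k c ∘ₗ (σ.toLinearMap - LinearMap.id)

variable (σ : A →ₐ[k] A) (c : A)

@[simp]
lemma innerSkewDerivation_apply (a : A) : innerSkewDerivation σ c a = c * (σ a - a) := rfl

lemma innerSkewDerivation_one : innerSkewDerivation σ c 1 = 0 := by simp

lemma innerSkewDerivation_mul (a a' : A) :
    innerSkewDerivation σ c (a * a') =
      σ a * innerSkewDerivation σ c a' + innerSkewDerivation σ c a * a' := by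
  simp only [innerSkewDerivation_apply, map_mul]
  ring

variable {σ c}

lemma map_innerSkewDerivation (hc : σ c = -c) (a : A) :
    σ (innerSkewDerivation σ c a) = -innerSkewDerivation σ c (σ a) := by
  simp only [innerSkewDerivation_apply, map_mul, map_sub, hc]
  ring

lemma innerSkewDerivation_innerSkewDerivation (hc : σ c = -c) (a : A) :
    innerSkewDerivation σ c (innerSkewDerivation σ c a) = -c ^ 2 * (σ (σ a) - a) := by
  simp only [innerSkewDerivation_apply, map_mul, map_sub, hc]
  ring

end InnerSkewDerivation

lemma isT421Action_innerSkewDerivation {k A : Type*} [Field k] [CommRing A] [Algebra k A]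
    {σ : A ≃ₐ[k] A} (hσ : σ ^ 4 = 1) {c : A} (hc : σ c = -c) (hc2 : c ^ 2 = -1) :
    IsT421Action σ (innerSkewDerivation (σ : A →ₐ[k] A) c) := by
  refine ⟨hσ, innerSkewDerivation_one _ _, innerSkewDerivation_mul _ _, ?_, ?_⟩ <;> ext a
  · exact map_innerSkewDerivation (σ := (σ : A →ₐ[k] A)) hc a
  · rw [LinearMap.comp_apply, innerSkewDerivation_innerSkewDerivation (σ := (σ : A →ₐ[k] A)) hc,
      hc2]
    simp

lemma AlgEquiv.pow_apply_of_apply_eq_smul {k A : Type*} [CommSemiring k] [Semiring A]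
    [Algebra k A] {σ : A ≃ₐ[k] A} {a : A} {ω : k} (h : σ a = ω • a) (m : ℕ) :
    (σ ^ m) a = ω ^ m • a := by
  induction m with
  | zero => simp
  | succ m ih => rw [pow_succ', AlgEquiv.mul_apply, ih, map_smul, h, smul_smul, pow_succ]

namespace PowerBasis

open Polynomial

variable {k A : Type*} [Field k] [CommRing A] [Algebra k A] (pb : PowerBasis k A)

lemma algEquiv_ext {σ τ : A ≃ₐ[k] A} (h : σ pb.gen = τ pb.gen) : σ = τ :=
  AlgEquiv.coe_toAlgHom_injective (pb.algHom_ext h)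

lemma orderOf_algEquiv (hu0 : pb.gen ≠ 0) {σ : A ≃ₐ[k] A} {ω : k}
    (hσ : σ pb.gen = ω • pb.gen) : orderOf σ = orderOf ω := by
  refine orderOf_eq_orderOf_iff.2 fun m => ⟨fun h => smul_left_injective k hu0 ?_, fun h => ?_⟩
  · simp [← AlgEquiv.pow_apply_of_apply_eq_smul hσ, h]
  · exact pb.algEquiv_ext (by simp [AlgEquiv.pow_apply_of_apply_eq_smul hσ, h])

lemma basis_repr_map {σ : A →ₐ[k] A} {ω : k} (hσ : σ pb.gen = ω • pb.gen) (a : A)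
    (i : Fin pb.dim) : pb.basis.repr (σ a) i = ω ^ (i : ℕ) * pb.basis.repr a i := by
  have : Finsupp.lapply i ∘ₗ pb.basis.repr.toLinearMap ∘ₗ σ.toLinearMap =
      ω ^ (i : ℕ) • (Finsupp.lapply i ∘ₗ pb.basis.repr.toLinearMap) := by
    refine pb.basis.ext fun j => ?_
    have hσb : σ (pb.basis j) = ω ^ (j : ℕ) • pb.basis j := by
      rw [pb.basis_eq_pow, map_pow, hσ, _root_.smul_pow]
    simp only [LinearMap.comp_apply, AlgHom.toLinearMap_apply, hσb, map_smul,
      LinearMap.smul_apply, Finsupp.lapply_apply, smul_eq_mul, LinearEquiv.coe_coe]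
    rw [pb.basis.repr_self, Finsupp.single_apply]
    split_ifs with hji
    · rw [hji]
    · simp
  exact LinearMap.congr_fun this a

lemma eq_smul_gen_pow_of_map_eq_smul {σ : A →ₐ[k] A} {ω μ : k} (hσ : σ pb.gen = ω • pb.gen)
    {a : A} (ha : σ a = μ • a) (j : Fin pb.dim) (hj : ∀ i ≠ j, ω ^ (i : ℕ) ≠ μ) :
    a = pb.basis.repr a j • pb.gen ^ (j : ℕ) := by
  have hcoeff (i : Fin pb.dim) : (ω ^ (i : ℕ) - μ) * pb.basis.repr a i = 0 := by
    have := pb.basis_repr_map hσ a i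
    rw [ha, map_smul, Finsupp.smul_apply, smul_eq_mul] at this
    linear_combination -this
  conv_lhs => rw [← pb.basis.sum_repr a]
  rw [Fintype.sum_eq_single j, pb.basis_eq_pow]
  intro i hi
  rw [(mul_eq_zero.1 (hcoeff i)).resolve_left (sub_ne_zero.2 (hj i hi)), zero_smul]

lemma minpoly_gen_eq_X_pow_sub_one [Nontrivial A] (hu : pb.gen ^ pb.dim = 1) :
    minpoly k pb.gen = X ^ pb.dim - 1 := by
  have hmonic : (X ^ pb.dim - 1 : k[X]).Monic := monic_X_pow_sub_C 1 pb.dim_pos.ne'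
  refine (eq_of_monic_of_dvd_of_natDegree_le (minpoly.monic pb.isIntegral_gen) hmonic
    (minpoly.dvd k pb.gen (by simp [hu])) ?_).symm
  rw [pb.natDegree_minpoly, ← C_1, natDegree_X_pow_sub_C]

section ScaleGen

variable [Nontrivial A] (hu : pb.gen ^ pb.dim = 1) {ω : k} (hω : ω ^ pb.dim = 1)

noncomputable def scaleGen : A →ₐ[k] A :=
  pb.lift (ω • pb.gen) (by simp [pb.minpoly_gen_eq_X_pow_sub_one hu, _root_.smul_pow, hu, hω])

@[simp]
lemma scaleGen_gen : pb.scaleGen hu hω pb.gen = ω • pb.gen :=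
  pb.lift_gen _ _

noncomputable def scaleGenEquiv : A ≃ₐ[k] A :=
  have hω0 : ω ≠ 0 := (IsUnit.of_pow_eq_one hω pb.dim_pos.ne').ne_zero
  AlgEquiv.ofAlgHom (pb.scaleGen hu hω) (pb.scaleGen hu (ω := ω⁻¹) (by rw [inv_pow, hω, inv_one]))
    (pb.algHom_ext (by simp [smul_smul, hω0])) (pb.algHom_ext (by simp [smul_smul, hω0]))

@[simp]
lemma scaleGenEquiv_gen : pb.scaleGenEquiv hu hω pb.gen = ω • pb.gen :=
  pb.scaleGen_gen hu hω

end ScaleGen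

end PowerBasis

lemma apply_apply_eq_of_skew_leibniz {k A : Type*} [CommRing k] [CommRing A] [Algebra k A]
    {σ : A → A} {δ : A →ₗ[k] A} (hδ : ∀ a c, δ (a * c) = σ a * δ c + δ a * c) {u : A}
    (hu : u ^ 4 = 1) {ζ γ : k} (hζ : ζ ^ 2 = -1) (hσ : σ u = ζ • u) (hδu : δ u = γ • u ^ 3) :
    δ (δ u) = (ζ * γ ^ 2) • u := by
  have hζ' : algebraMap k A ζ ^ 2 = -1 := by rw [← map_pow, hζ, map_neg, map_one]
  have h2 : δ (u ^ 2) = (γ * (1 + ζ)) • 1 := by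
    rw [sq, hδ, hσ, hδu]
    simp only [Algebra.smul_def, map_mul, map_add, map_one]
    linear_combination (algebraMap k A γ * (1 + algebraMap k A ζ)) * hu
  have h3 : δ (u ^ 3) = (γ * ζ) • u := by
    rw [pow_succ', hδ, hσ, hδu, h2]
    simp only [Algebra.smul_def, map_mul, map_add, map_one]
    linear_combination (algebraMap k A γ * u) * hu + (algebraMap k A γ * u) * hζ'
  rw [hδu, map_smul, h3, smul_smul]
  congr 1
  ring

namespace IsPrimitiveRoot

variable {k : Type*} [CommRing k] [IsDomain k] {ζ : k} (hζ : IsPrimitiveRoot ζ 4)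
include hζ

lemma sq_eq_neg_one_of_four : ζ ^ 2 = -1 :=
  (hζ.pow (by norm_num) (by norm_num : 4 = 2 * 2)).eq_neg_one_of_two_right

lemma pow_ne_neg_self_of_four {i : ℕ} (hi : i < 4) (hi3 : i ≠ 3) : ζ ^ i ≠ -ζ := fun h =>
  hi3 (hζ.pow_inj hi (by norm_num) (by linear_combination h - ζ * hζ.sq_eq_neg_one_of_four))

end IsPrimitiveRoot

section QuarticGroupAlgebra

variable {k A : Type*} [Field k] [CommRing A] [Algebra k A] {ζ : k} (hζ : IsPrimitiveRoot ζ 4)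
  {u : A} (b : Module.Basis (Fin 4) k A) (hb : ∀ i : Fin 4, b i = u ^ (i : ℕ)) (hu : u ^ 4 = 1)
include hζ hb hu

theorem exists_isT421Action {γ : k} (hγ : γ ^ 2 = 2 * ζ) :
    ∃ (σ : A ≃ₐ[k] A) (δ : A →ₗ[k] A),
      IsT421Action σ δ ∧ σ u = ζ • u ∧ δ u = γ • u ^ 3 ∧ orderOf σ = 4 ∧ δ ≠ 0 := by
  let pb : PowerBasis k A := ⟨u, 4, b, hb⟩
  have hu0 : u ≠ 0 := by simpa [hb] using b.ne_zero 1
  have : Nontrivial A := nontrivial_of_ne u 0 hu0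
  have hζ2 := hζ.sq_eq_neg_one_of_four
  let σ := pb.scaleGenEquiv hu hζ.pow_eq_one
  have hσu : σ u = ζ • u := pb.scaleGenEquiv_gen hu hζ.pow_eq_one
  have hσ : orderOf σ = 4 := (pb.orderOf_algEquiv hu0 hσu).trans hζ.eq_orderOf.symm
  have hζ1 : ζ - 1 ≠ 0 := sub_ne_zero.2 (hζ.ne_one (by norm_num))
  have hγκ : γ / (ζ - 1) * (ζ - 1) = γ := div_mul_cancel₀ γ hζ1
  set κ := γ / (ζ - 1)
  have hκ : κ ^ 2 = -1 := by
    rw [div_pow, div_eq_iff (pow_ne_zero _ hζ1)]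
    linear_combination hγ + hζ2
  have hc : σ (κ • u ^ 2) = -(κ • u ^ 2) := by
    rw [map_smul, map_pow, hσu, _root_.smul_pow, hζ2, neg_one_smul, smul_neg]
  have hc2 : (κ • u ^ 2) ^ 2 = -1 := by
    rw [_root_.smul_pow, ← pow_mul, hu, hκ, neg_one_smul]
  have hδu : innerSkewDerivation (σ : A →ₐ[k] A) (κ • u ^ 2) u = γ • u ^ 3 := by
    simp only [innerSkewDerivation_apply, AlgEquiv.coe_toAlgHom, hσu, Algebra.smul_def,
      ← hγκ, map_mul, map_sub, map_one]
    ring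
  refine ⟨σ, _, isT421Action_innerSkewDerivation (hσ ▸ pow_orderOf_eq_one σ) hc hc2, hσu, hδu,
    hσ, fun h => ?_⟩
  have hγ0 : γ ≠ 0 := by
    rintro rfl
    exact hζ.pow_ne_neg_self_of_four (i := 1) (by norm_num) (by norm_num)
      (by linear_combination -hγ)
  have hu3 : u ^ 3 ≠ 0 := by simpa [hb] using b.ne_zero 3
  exact smul_ne_zero hγ0 hu3 (by rw [← hδu, h, LinearMap.zero_apply])

theorem exists_sq_eq_of_isT421Action {σ : A ≃ₐ[k] A} {δ : A →ₗ[k] A} (h : IsT421Action σ δ)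
    (hσu : σ u = ζ • u) : ∃ γ : k, γ ^ 2 = 2 * ζ ∧ δ u = γ • u ^ 3 := by
  obtain ⟨-, -, hleib, hanti, hsq⟩ := h
  let pb : PowerBasis k A := ⟨u, 4, b, hb⟩
  have hu0 : u ≠ 0 := by simpa [hb] using b.ne_zero 1
  have hζ2 := hζ.sq_eq_neg_one_of_four
  have hσδu : σ (δ u) = (-ζ) • δ u := by
    have h := LinearMap.congr_fun hanti u
    simp only [LinearMap.coe_comp, LinearEquiv.coe_coe, AlgEquiv.coe_toLinearEquiv,
      Function.comp_apply, LinearMap.neg_apply] at h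
    rw [h, hσu, map_smul, neg_smul]
  set γ := b.repr (δ u) 3
  have hδu : δ u = γ • u ^ 3 := pb.eq_smul_gen_pow_of_map_eq_smul (σ := σ) hσu hσδu 3
    fun i hi => hζ.pow_ne_neg_self_of_four i.isLt (fun h => hi (Fin.ext h))
  have hζγ : (ζ * γ ^ 2) • u = (-2 : k) • u := by
    have h := LinearMap.congr_fun hsq u
    simp only [LinearMap.coe_comp, Function.comp_apply, LinearEquiv.comp_coe, LinearMap.sub_apply,
      LinearEquiv.coe_coe, LinearEquiv.trans_apply, AlgEquiv.toLinearEquiv_apply,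
      LinearMap.id_coe, id_eq] at h
    rw [← apply_apply_eq_of_skew_leibniz hleib hu hζ2 hσu hδu, h, hσu, map_smul, hσu, smul_smul,
      ← sq, hζ2]
    module
  refine ⟨γ, ?_, hδu⟩
  linear_combination (-ζ) * smul_left_injective k hu0 hζγ + γ ^ 2 * hζ2

end QuarticGroupAlgebra

theorem stmt_13_general (k : Type*) [Field k]
    (ζ : k) (hζ : IsPrimitiveRoot ζ 4)
    (A : Type*) [CommRing A] [Algebra k A]
    (u : A) (b : Module.Basis (Fin 4) k A) (hb : ∀ i : Fin 4, b i = u ^ (i : ℕ))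
    (hu : u ^ 4 = 1) :
    (∀ γ : k, γ ^ 2 = 2 * ζ →
      ∃ (σ : A ≃ₐ[k] A) (δ : A →ₗ[k] A),
        IsT421Action σ δ ∧ σ u = ζ • u ∧ δ u = γ • u ^ 3 ∧
        orderOf σ = 4 ∧ δ ≠ 0) ∧
    (∀ (σ : A ≃ₐ[k] A) (δ : A →ₗ[k] A),
      IsT421Action σ δ → σ u = ζ • u → δ ≠ 0 →
        ∃ γ : k, γ ^ 2 = 2 * ζ ∧ δ u = γ • u ^ 3) :=
  ⟨fun _ hγ => exists_isT421Action hζ b hb hu hγ,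
    fun _ _ h hσu _ => exists_sq_eq_of_isT421Action hζ b hb hu h hσu⟩

/-- On `A = k[u]/(u⁴ - 1)` with `ζ` a primitive 4th root of unity:
(i) for every `γ` with `γ² = 2ζ` there is an inner-faithful `T(4,2,1)`-module-algebra
structure with `σ(u) = ζ·u`, `δ(u) = γ·u³`; (ii) every such structure with
`σ(u) = ζ·u` and `δ ≠ 0` satisfies `δ(u) = γ·u³` for some `γ` with `γ² = 2ζ`. -/
theorem stmt_13 (k : Type*) [Field k] [IsAlgClosed k] [CharZero k]
    (ζ : k) (hζ : IsPrimitiveRoot ζ 4)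
    (A : Type*) [CommRing A] [Algebra k A]
    (u : A) (b : Module.Basis (Fin 4) k A) (hb : ∀ i : Fin 4, b i = u ^ (i : ℕ))
    (hu : u ^ 4 = 1) :
    (∀ γ : k, γ ^ 2 = 2 * ζ →
      ∃ (σ : A ≃ₐ[k] A) (δ : A →ₗ[k] A),
        IsT421Action σ δ ∧ σ u = ζ • u ∧ δ u = γ • u ^ 3 ∧
        orderOf σ = 4 ∧ δ ≠ 0) ∧
    (∀ (σ : A ≃ₐ[k] A) (δ : A →ₗ[k] A),
      IsT421Action σ δ → σ u = ζ • u → δ ≠ 0 →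
        ∃ γ : k, γ ^ 2 = 2 * ζ ∧ δ u = γ • u ^ 3) :=
  stmt_13_general k ζ hζ A u b hb hu
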